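/- Let α > 0 and let f₁, f₂ be C⁴ solutions on [y₀, ∞) of f(y) = Σ_{j=0}^4 α_i^j (y-y₀)^j/j! + (quintuple integral of |f|^{α-1}f from y₀), corresponding to λ = -1. If f₁⁽ʲ⁾(y₀) ≥ f₂⁽ʲ⁾(y₀) for j = 0,...,4, with strict inequality for at least one j, then f₁(y) > f₂(y) for every y > y₀. -/

import Mathlib

/-!
Write `g = f₁ - f₂`. Subtracting the two integral equations, `g` is the Taylor polynomial with the
nonnegative coefficients `a₁ - a₂` (positive on `(y₀, ∞)`) plus the quintuple integral of
`F ∘ f₁ - F ∘ f₂`, where `F s = |s|^(α-1) s` is continuous and nondecreasing. Near `y₀` that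
integral is `O((y - y₀)^5)` and is dominated by the lowest-order positive term of the polynomial, so `g > 0`
just to the right of `y₀`. At a first point `y` after that where `g y ≤ 0`, `g` is positive on
`(y₀, y)`, hence so are `F ∘ f₁ - F ∘ f₂` and its iterated integrals, and `g y` exceeds the positive
polynomial term: a contradiction.
-/

open Set intervalIntegral Filter Topology Nat

noncomputable def signedRpow (α s : ℝ) : ℝ := |s| ^ (α - 1) * s

lemma signedRpow_neg (α s : ℝ) : signedRpow α (-s) = -signedRpow α s := by
  simp [signedRpow]

lemma signedRpow_of_nonneg {α s : ℝ} (hα : 0 < α) (hs : 0 ≤ s) : signedRpow α s = s ^ α := by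
  rcases hs.eq_or_lt with rfl | hs
  · simp [signedRpow, Real.zero_rpow hα.ne']
  · rw [signedRpow, abs_of_pos hs, Real.rpow_sub_one hs.ne', div_mul_cancel₀ _ hs.ne']

lemma abs_signedRpow {α : ℝ} (hα : 0 < α) (s : ℝ) : |signedRpow α s| = |s| ^ α := by
  rw [← signedRpow_of_nonneg hα (abs_nonneg s), signedRpow, signedRpow, abs_mul, abs_abs,
    abs_of_nonneg (Real.rpow_nonneg (abs_nonneg s) _)]

lemma monotone_signedRpow {α : ℝ} (hα : 0 < α) : Monotone (signedRpow α) :=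
  monotone_of_odd_of_monotoneOn_nonneg (signedRpow_neg α) fun s hs t ht hst => by
    rw [signedRpow_of_nonneg hα hs, signedRpow_of_nonneg hα ht]
    exact Real.rpow_le_rpow hs hst hα.le

lemma continuous_signedRpow {α : ℝ} (hα : 0 < α) : Continuous (signedRpow α) := by
  refine continuous_iff_continuousAt.2 fun x => ?_
  rcases eq_or_ne x 0 with rfl | hx
  · have h : Tendsto (fun s : ℝ => |s| ^ α) (𝓝 0) (𝓝 0) := by
      simpa [Function.comp_def, Real.zero_rpow hα.ne'] using
        ((Real.continuous_rpow_const hα.le).comp continuous_abs).tendsto 0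
    simpa [ContinuousAt, signedRpow] using
      squeeze_zero_norm (fun s => (abs_signedRpow hα s).le) h
  · exact ((Real.continuousAt_rpow_const _ _ (Or.inl (abs_ne_zero.2 hx))).comp
      continuous_abs.continuousAt).mul continuousAt_id

noncomputable def primitiveFrom (a : ℝ) (u : ℝ → ℝ) (y : ℝ) : ℝ := ∫ r in a..y, u r

section primitiveFrom

variable {a y : ℝ} {u v : ℝ → ℝ}

lemma continuousOn_primitiveFrom (hu : ContinuousOn u (Ici a)) :
    ContinuousOn (primitiveFrom a u) (Ici a) := by
  refine continuousOn_of_locally_continuousOn fun x hx =>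
    ⟨Iio (x + 1), isOpen_Iio, lt_add_one x, ?_⟩
  have hax : a ≤ x + 1 := by linarith [mem_Ici.1 hx]
  have h := continuousOn_primitive_interval (μ := MeasureTheory.volume)
    ((hu.mono (by rw [uIcc_of_le hax]; exact Icc_subset_Ici_self)).integrableOn_compact
      isCompact_uIcc)
  rw [uIcc_of_le hax] at h
  exact h.mono fun r hr => ⟨hr.1, hr.2.le⟩

lemma continuousOn_iterate_primitiveFrom (hu : ContinuousOn u (Ici a)) (n : ℕ) :
    ContinuousOn ((primitiveFrom a)^[n] u) (Ici a) := by
  induction n with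
  | zero => exact hu
  | succ n ih =>
    rw [Function.iterate_succ_apply']
    exact continuousOn_primitiveFrom ih

lemma iterate_primitiveFrom_sub (hu : ContinuousOn u (Ici a)) (hv : ContinuousOn v (Ici a))
    (n : ℕ) (hy : a ≤ y) :
    (primitiveFrom a)^[n] (u - v) y = (primitiveFrom a)^[n] u y - (primitiveFrom a)^[n] v y := by
  induction n generalizing y with
  | zero => rfl
  | succ n ih =>
    simp only [Function.iterate_succ_apply', primitiveFrom]
    have hint {w : ℝ → ℝ} (hw : ContinuousOn w (Ici a)) :
        IntervalIntegrable ((primitiveFrom a)^[n] w) MeasureTheory.volume a y :=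
      ((continuousOn_iterate_primitiveFrom hw n).mono Icc_subset_Ici_self).intervalIntegrable_of_Icc
        hy
    rw [← integral_sub (hint hu) (hint hv)]
    refine integral_congr fun r hr => ih ?_
    rw [uIcc_of_le hy] at hr
    exact hr.1

lemma primitiveFrom_nonneg (hy : a ≤ y) (hu : ∀ x ∈ Ioo a y, 0 ≤ u x) :
    0 ≤ primitiveFrom a u y := by
  rw [primitiveFrom, integral_of_le hy, MeasureTheory.integral_Ioc_eq_integral_Ioo]
  exact MeasureTheory.setIntegral_nonneg measurableSet_Ioo hu

lemma iterate_succ_primitiveFrom_nonneg (n : ℕ) (hy : a ≤ y) (hu : ∀ x ∈ Ioo a y, 0 ≤ u x) :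
    0 ≤ (primitiveFrom a)^[n + 1] u y := by
  induction n generalizing y with
  | zero => exact primitiveFrom_nonneg hy hu
  | succ n ih =>
    rw [Function.iterate_succ_apply']
    exact primitiveFrom_nonneg hy fun x hx =>
      ih hx.1.le fun r hr => hu r ⟨hr.1, hr.2.trans hx.2⟩

lemma integral_mul_sub_pow_div_factorial (M : ℝ) (n : ℕ) :
    ∫ x in a..y, M * (x - a) ^ n / n ! = M * (y - a) ^ (n + 1) / (n + 1)! := by
  rw [integral_comp_sub_right (fun x => M * x ^ n / n !), intervalIntegral.integral_div,
    integral_const_mul, integral_pow, factorial_succ]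
  push_cast
  field_simp
  ring

lemma abs_iterate_primitiveFrom_le {b M : ℝ} (hu : ∀ x ∈ Icc a b, |u x| ≤ M) (n : ℕ)
    (hy : y ∈ Icc a b) : |(primitiveFrom a)^[n] u y| ≤ M * (y - a) ^ n / n ! := by
  induction n generalizing y with
  | zero => simpa using hu y hy
  | succ n ih =>
    rw [Function.iterate_succ_apply', ← integral_mul_sub_pow_div_factorial, ← Real.norm_eq_abs]
    exact norm_integral_le_of_norm_le hy.1 (MeasureTheory.ae_of_all _ fun x hx =>
        (Real.norm_eq_abs _).trans_le (ih ⟨hx.1.le, hx.2.trans hy.2⟩))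
      ((by fun_prop : Continuous fun x => M * (x - a) ^ n / n !).intervalIntegrable _ _)

end primitiveFrom

lemma mul_pow_div_factorial_lt {M c t : ℝ} {k n : ℕ} (hkn : k < n) (hM : 0 ≤ M) (ht : 0 < t)
    (ht1 : t ≤ 1) (hMt : M * t < c) : M * t ^ n / n ! < c * t ^ k / k ! :=
  calc M * t ^ n / n ! ≤ M * t ^ (k + 1) / k ! := by
        refine div_le_div₀ (by positivity)
          (mul_le_mul_of_nonneg_left (pow_le_pow_of_le_one ht.le ht1 hkn) hM) (by positivity) ?_
        exact_mod_cast factorial_le hkn.le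
    _ = M * t * t ^ k / k ! := by ring
    _ < c * t ^ k / k ! := by gcongr

lemma single_le_sum_taylor {n : ℕ} {c : Fin n → ℝ} (hc : ∀ j, 0 ≤ c j) (k : Fin n) {t : ℝ}
    (ht : 0 ≤ t) : c k * t ^ (k : ℕ) / (k : ℕ)! ≤ ∑ j, c j * t ^ (j : ℕ) / (j : ℕ)! :=
  Finset.single_le_sum (f := fun j => c j * t ^ (j : ℕ) / (j : ℕ)!)
    (fun j _ => by have := hc j; positivity) (Finset.mem_univ k)

lemma pos_near_of_pow_sub_pow_le {g : ℝ → ℝ} {a c M : ℝ} {k n : ℕ} (hkn : k < n) (hM : 0 ≤ M)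
    (hg : ∀ x ∈ Ioc a (a + 1), c * (x - a) ^ k / (k !) - M * (x - a) ^ n / n ! ≤ g x) :
    ∀ x ∈ Ioc a (a + min 1 (c / (M + 1))), 0 < g x := by
  intro x ⟨hax, hxδ⟩
  rw [← sub_le_iff_le_add', le_min_iff, le_div_iff₀ (by linarith)] at hxδ
  have hdom := mul_pow_div_factorial_lt hkn hM (sub_pos.2 hax) hxδ.1 (by linarith [hxδ.2])
  linarith [hg x ⟨hax, by linarith [hxδ.1]⟩]

lemma pos_of_pos_near_of_pos_step {g : ℝ → ℝ} {a δ y : ℝ} (hg : ContinuousOn g (Ici a))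
    (hδ : 0 < δ) (hnear : ∀ x ∈ Ioc a (a + δ), 0 < g x)
    (hstep : ∀ x, a < x → (∀ r ∈ Ioo a x, 0 < g r) → 0 < g x) (hy : a < y) : 0 < g y := by
  by_contra! hgy
  set S := Ici (a + δ) ∩ g ⁻¹' Iic 0
  have hS : IsClosed S :=
    (hg.mono (Ici_subset_Ici.2 (by linarith))).preimage_isClosed_of_isClosed isClosed_Ici
      isClosed_Iic
  have hSbdd : BddBelow S := ⟨a + δ, fun x hx => hx.1⟩
  have hyS : y ∈ S := ⟨not_lt.1 fun h => (hnear y ⟨hy, h.le⟩).not_ge hgy, hgy⟩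
  have hmS : sInf S ∈ S := hS.csInf_mem ⟨y, hyS⟩ hSbdd
  refine (hstep (sInf S) ?_ fun x hx => ?_).not_ge hmS.2
  · linarith [mem_Ici.1 hmS.1]
  · rcases le_or_gt x (a + δ) with hxδ | hxδ
    · exact hnear x ⟨hx.1, hxδ⟩
    · by_contra! hgx
      exact hx.2.not_ge (csInf_le hSbdd ⟨hxδ.le, hgx⟩)

theorem lt_of_eq_taylor_add_iterate_primitiveFrom {n : ℕ} {F : ℝ → ℝ} (hF : Continuous F)
    (hFm : Monotone F) {a : ℝ} {f₁ f₂ : ℝ → ℝ} {c₁ c₂ : Fin n → ℝ}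
    (hf₁ : ContinuousOn f₁ (Ici a)) (hf₂ : ContinuousOn f₂ (Ici a))
    (h₁ : ∀ y, a ≤ y →
      f₁ y = ∑ j, c₁ j * (y - a) ^ (j : ℕ) / (j : ℕ)! + (primitiveFrom a)^[n] (F ∘ f₁) y)
    (h₂ : ∀ y, a ≤ y →
      f₂ y = ∑ j, c₂ j * (y - a) ^ (j : ℕ) / (j : ℕ)! + (primitiveFrom a)^[n] (F ∘ f₂) y)
    (hc : ∀ j, c₂ j ≤ c₁ j) (hcs : ∃ j, c₂ j < c₁ j) {y : ℝ} (hy : a < y) : f₂ y < f₁ y := by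
  obtain ⟨k, hk⟩ := hcs
  have hF₁ := hF.comp_continuousOn hf₁
  have hF₂ := hF.comp_continuousOn hf₂
  set u := F ∘ f₁ - F ∘ f₂
  have hu : ContinuousOn u (Ici a) := hF₁.sub hF₂
  have hdiff : ∀ y, a ≤ y → f₁ y - f₂ y =
      ∑ j, (c₁ j - c₂ j) * (y - a) ^ (j : ℕ) / (j : ℕ)! + (primitiveFrom a)^[n] u y := by
    intro y hy
    rw [h₁ y hy, h₂ y hy, iterate_primitiveFrom_sub hF₁ hF₂ n hy]
    simp only [sub_mul, sub_div, Finset.sum_sub_distrib]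
    ring
  have hlead : ∀ y, a ≤ y → (c₁ k - c₂ k) * (y - a) ^ (k : ℕ) / (k : ℕ)! ≤
      ∑ j, (c₁ j - c₂ j) * (y - a) ^ (j : ℕ) / (j : ℕ)! := fun y hy =>
    single_le_sum_taylor (fun j => sub_nonneg.2 (hc j)) k (sub_nonneg.2 hy)
  obtain ⟨M, hM⟩ := isCompact_Icc.exists_bound_of_continuousOn
    (hu.mono (Icc_subset_Ici_self : Icc a (a + 1) ⊆ Ici a))
  have hM0 : 0 ≤ M := (norm_nonneg _).trans (hM a ⟨le_rfl, by linarith⟩)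
  have hδ : 0 < min 1 ((c₁ k - c₂ k) / (M + 1)) := by
    have := sub_pos.2 hk
    positivity
  rw [← sub_pos]
  refine pos_of_pos_near_of_pos_step (g := f₁ - f₂) (hf₁.sub hf₂) hδ
    (pos_near_of_pow_sub_pow_le k.isLt hM0 fun x hx => ?_) (fun x hx hpos => ?_) hy
  · have hD := abs_iterate_primitiveFrom_le (fun r hr => (hM r hr).trans' (Real.norm_eq_abs _).ge)
      n ⟨hx.1.le, hx.2⟩
    rw [Pi.sub_apply, hdiff x hx.1.le]
    linarith [abs_le.1 hD, hlead x hx.1.le]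
  · have hD : 0 ≤ (primitiveFrom a)^[n] u x := by
      obtain ⟨m, rfl⟩ := exists_eq_add_one_of_ne_zero (k.pos.ne')
      exact iterate_succ_primitiveFrom_nonneg m hx.le fun r hr =>
        sub_nonneg.2 (hFm (sub_pos.1 (hpos r hr)).le)
    have hpoly : 0 < (c₁ k - c₂ k) * (x - a) ^ (k : ℕ) / (k : ℕ)! := by
      have := sub_pos.2 hk
      have := sub_pos.2 hx
      positivity
    rw [Pi.sub_apply, hdiff x hx.le]
    linarith [hlead x hx.le]

/-- Comparison principle for weak `C⁴` solutions of `f⁽⁵⁾ = |f|^{α-1}f`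
(`λ = -1`): if two solutions of the quintuple-integral equation with data
`a₁, a₂` at `y₀` satisfy `a₁ j ≥ a₂ j` for `j = 0,…,4`, with strict
inequality for at least one `j`, then `f₁ > f₂` on `(y₀, ∞)`. -/
theorem stmt12 (α y₀ : ℝ) (f₁ f₂ : ℝ → ℝ) (a₁ a₂ : Fin 5 → ℝ)
    (hα : 0 < α)
    (hc₁ : ContinuousOn f₁ (Ici y₀)) (hc₂ : ContinuousOn f₂ (Ici y₀))
    (hint₁ : ∀ y : ℝ, y₀ ≤ y →
      f₁ y = (∑ j : Fin 5, a₁ j * (y - y₀) ^ (j : ℕ) / (Nat.factorial j)) +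
        ∫ s₄ in y₀..y, ∫ s₃ in y₀..s₄, ∫ s₂ in y₀..s₃, ∫ s₁ in y₀..s₂,
          ∫ r in y₀..s₁, |f₁ r| ^ (α - 1) * f₁ r)
    (hint₂ : ∀ y : ℝ, y₀ ≤ y →
      f₂ y = (∑ j : Fin 5, a₂ j * (y - y₀) ^ (j : ℕ) / (Nat.factorial j)) +
        ∫ s₄ in y₀..y, ∫ s₃ in y₀..s₄, ∫ s₂ in y₀..s₃, ∫ s₁ in y₀..s₂,
          ∫ r in y₀..s₁, |f₂ r| ^ (α - 1) * f₂ r)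
    (hord : ∀ j : Fin 5, a₂ j ≤ a₁ j) (hstrict : ∃ j : Fin 5, a₂ j < a₁ j) :
    ∀ y : ℝ, y₀ < y → f₂ y < f₁ y := fun _ hy =>
  -- `hint₁` and `hint₂` unfold from `(primitiveFrom y₀)^[5] (signedRpow α ∘ fᵢ)`.
  lt_of_eq_taylor_add_iterate_primitiveFrom (continuous_signedRpow hα) (monotone_signedRpow hα)
    hc₁ hc₂ hint₁ hint₂ hord hstrict hy
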